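/- Choi's criterion for complete positivity: let Φ be a ℂ-linear map from n×n complex matrices to m×m complex matrices with Choi matrix C(Φ) = Σ_{i,j<n} Φ(E_{ij}) ⊗ E_{ij}. Then Φ is completely positive — i.e. for every k ≥ 1, the linear map Φ ⊗ id_k (the unique linear map on matrices over ℂ^n ⊗ ℂ^k satisfying (Φ ⊗ id_k)(A ⊗ B) = Φ(A) ⊗ B) sends every positive semidefinite matrix to a positive semidefinite matrix — if and only if C(Φ) is positive semidefinite. -/

import Mathlib

open Matrix Kronecker
open scoped ComplexOrder

/-- The Choi matrix of a linear map `Φ` on matrices: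
`C(Φ) = Σ_{i,j} Φ(E_{ij}) ⊗ E_{ij}`. -/
noncomputable def choiMatrix (m n : ℕ)
    (Φ : Matrix (Fin n) (Fin n) ℂ →ₗ[ℂ] Matrix (Fin m) (Fin m) ℂ) :
    Matrix (Fin m × Fin n) (Fin m × Fin n) ℂ :=
  ∑ i : Fin n, ∑ j : Fin n,
    (Φ (single i j (1 : ℂ))) ⊗ₖ single i j (1 : ℂ)

/-- canonical ampliation -/
noncomputable def ampl (m n k : ℕ)
    (Φ : Matrix (Fin n) (Fin n) ℂ →ₗ[ℂ] Matrix (Fin m) (Fin m) ℂ) :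
    Matrix (Fin n × Fin k) (Fin n × Fin k) ℂ →ₗ[ℂ]
      Matrix (Fin m × Fin k) (Fin m × Fin k) ℂ where
  toFun M := fun p q => Φ (fun i j => M (i, p.2) (j, q.2)) p.1 q.1
  map_add' M N := by
    ext p q
    have h : (fun i j => (M + N) (i, p.2) (j, q.2))
        = (fun i j => M (i, p.2) (j, q.2)) + (fun i j => N (i, p.2) (j, q.2)) := rfl
    simp only [h, map_add]
    exact congrFun (congrFun (map_add Φ _ _) p.1) q.1
  map_smul' c M := by
    ext p q
    have h : (fun i j => (c • M) (i, p.2) (j, q.2))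
        = c • (fun i j => M (i, p.2) (j, q.2)) := rfl
    simp only [h, LinearMap.map_smul, RingHom.id_apply]
    exact congrFun (congrFun (Φ.map_smul c _) p.1) q.1

lemma ampl_kron (m n k : ℕ)
    (Φ : Matrix (Fin n) (Fin n) ℂ →ₗ[ℂ] Matrix (Fin m) (Fin m) ℂ)
    (A : Matrix (Fin n) (Fin n) ℂ) (B : Matrix (Fin k) (Fin k) ℂ) :
    ampl m n k Φ (A ⊗ₖ B) = (Φ A) ⊗ₖ B := by
  ext ⟨i, a⟩ ⟨j, b⟩
  show Φ (fun p q => A p q * B a b) i j = Φ A i j * B a b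
  have h : (fun p q => A p q * B a b) = B a b • A := by
    ext p q; simp [mul_comm]
  rw [h, LinearMap.map_smul]
  simp [Matrix.smul_apply, smul_eq_mul, mul_comm]

lemma psd_sum {ι α : Type*} [Fintype α] (s : Finset ι)
    (f : ι → Matrix α α ℂ) (h : ∀ i ∈ s, (f i).PosSemidef) :
    (∑ i ∈ s, f i).PosSemidef := by
  classical
  induction s using Finset.induction_on with
  | empty => simpa using Matrix.PosSemidef.zero
  | @insert x s hx ih =>
    rw [Finset.sum_insert hx]
    exact (h _ (Finset.mem_insert_self _ _)).add
      (ih fun i hi => h i (Finset.mem_insert_of_mem hi))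

lemma sum_kron {ι : Type*} {m n k l : ℕ} (s : Finset ι)
    (f : ι → Matrix (Fin m) (Fin n) ℂ) (B : Matrix (Fin k) (Fin l) ℂ) :
    (∑ r ∈ s, f r) ⊗ₖ B = ∑ r ∈ s, (f r) ⊗ₖ B := by
  ext ⟨i, a⟩ ⟨j, b⟩
  simp [Matrix.sum_apply, kroneckerMap_apply, Finset.sum_mul]

lemma kron_one_conjTranspose {m n k : ℕ} (V : Matrix (Fin m) (Fin n) ℂ) :
    (V ⊗ₖ (1 : Matrix (Fin k) (Fin k) ℂ))ᴴ = Vᴴ ⊗ₖ (1 : Matrix (Fin k) (Fin k) ℂ) := by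
  ext ⟨i, a⟩ ⟨j, b⟩
  simp only [conjTranspose_apply, kroneckerMap_apply, one_apply, mul_ite, mul_one, mul_zero]
  by_cases hab : b = a
  · subst hab; simp
  · rw [if_neg hab, if_neg (fun e => hab e.symm)]; simp

lemma stdBasis_prod {m n k l : ℕ} (i : Fin m) (j : Fin n) (a : Fin k) (b : Fin l) :
    (single (i, a) (j, b) (1 : ℂ))
      = single i j (1 : ℂ) ⊗ₖ single a b (1 : ℂ) := by
  ext ⟨p, c⟩ ⟨q, d⟩
  simp only [Matrix.single, of_apply, kroneckerMap_apply, Prod.mk.injEq, ite_and]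
  split_ifs <;> simp_all

open scoped MatrixOrder Matrix.Norms.L2Operator in
lemma psd_factor {N : Type*} [Fintype N] [DecidableEq N] (A : Matrix N N ℂ)
    (h : A.PosSemidef) : ∃ B : Matrix N N ℂ, A = Bᴴ * B := by
  obtain ⟨B, hB⟩ := CStarAlgebra.nonneg_iff_eq_star_mul_self.mp h.nonneg
  exact ⟨B, hB⟩

/-- Choi's criterion: `Φ` is completely positive — every ampliation
`Φ ⊗ id_k` (characterized by its action on Kronecker products) maps positive semidefinite
matrices to positive semidefinite matrices — iff its Choi matrix is positive semidefinite. -/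
theorem completely_positive_iff_choi_posSemidef (m n : ℕ)
    (Φ : Matrix (Fin n) (Fin n) ℂ →ₗ[ℂ] Matrix (Fin m) (Fin m) ℂ) :
    (∀ k : ℕ, 1 ≤ k →
      ∀ Ψ : Matrix (Fin n × Fin k) (Fin n × Fin k) ℂ →ₗ[ℂ]
            Matrix (Fin m × Fin k) (Fin m × Fin k) ℂ,
        (∀ (A : Matrix (Fin n) (Fin n) ℂ) (B : Matrix (Fin k) (Fin k) ℂ),
          Ψ (A ⊗ₖ B) = (Φ A) ⊗ₖ B) →
        ∀ M : Matrix (Fin n × Fin k) (Fin n × Fin k) ℂ,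
          M.PosSemidef → (Ψ M).PosSemidef) ↔
    (choiMatrix m n Φ).PosSemidef := by
  constructor
  · intro h
    rcases Nat.eq_zero_or_pos n with hn | hn
    · subst hn
      have h0 : choiMatrix m 0 Φ = 0 := by simp [choiMatrix]
      rw [h0]; exact Matrix.PosSemidef.zero
    have key := h n hn (ampl m n n Φ) (ampl_kron m n n Φ)
    set M : Matrix (Fin n × Fin n) (Fin n × Fin n) ℂ :=
      ∑ i : Fin n, ∑ j : Fin n, single i j (1 : ℂ) ⊗ₖ single i j (1 : ℂ) with hM
    have hMpsd : M.PosSemidef := by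
      have hrep : M = (Matrix.of (fun (_ : Fin 1) (p : Fin n × Fin n) =>
          if p.1 = p.2 then (1:ℂ) else 0))ᴴ *
          (Matrix.of (fun (_ : Fin 1) (p : Fin n × Fin n) => if p.1 = p.2 then (1:ℂ) else 0)) := by
        ext ⟨i, a⟩ ⟨j, b⟩
        simp only [hM, Matrix.sum_apply, kroneckerMap_apply, Matrix.single, of_apply,
          Matrix.mul_apply, conjTranspose_apply, Fin.sum_univ_one, ite_and, mul_ite, ite_mul,
          mul_one, mul_zero, one_mul, zero_mul,
          Finset.sum_ite_eq, Finset.sum_ite_eq', Finset.mem_univ, if_true]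
        rw [apply_ite (star : ℂ → ℂ)]
        simp only [star_one, star_zero, ite_mul, one_mul, zero_mul]
        split_ifs <;> simp_all <;> tauto
      rw [hrep]
      exact posSemidef_conjTranspose_mul_self _
    have hchoi : ampl m n n Φ M = choiMatrix m n Φ := by
      rw [hM, choiMatrix, map_sum]
      refine Finset.sum_congr rfl fun i _ => ?_
      rw [map_sum]
      exact Finset.sum_congr rfl fun j _ => ampl_kron m n n Φ _ _
    have := key M hMpsd
    rwa [hchoi] at this
  · intro hC k hk Ψ hΨ M hMpsd
    obtain ⟨B, hB⟩ := psd_factor _ hC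
    set V : (Fin m × Fin n) → Matrix (Fin m) (Fin n) ℂ :=
      fun r => Matrix.of (fun i a => star (B r (i, a))) with hV
    have hentry : ∀ (i j : Fin m) (a b : Fin n),
        Φ (single a b (1 : ℂ)) i j = ∑ r, V r i a * star (V r j b) := by
      intro i j a b
      have h1 : choiMatrix m n Φ ((i, a)) ((j, b)) = Φ (single a b (1 : ℂ)) i j := by
        simp only [choiMatrix, Matrix.sum_apply, kroneckerMap_apply]
        rw [Finset.sum_eq_single a]
        · rw [Finset.sum_eq_single b]
          · simp [Matrix.single]
          · intro c _ hc; simp [Matrix.single, hc]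
          · simp
        · intro c _ hc
          apply Finset.sum_eq_zero
          intro d _
          simp [Matrix.single, hc]
        · simp
      have h2 : choiMatrix m n Φ ((i, a)) ((j, b)) = ∑ r, V r i a * star (V r j b) := by
        rw [hB]
        simp only [Matrix.mul_apply, conjTranspose_apply, hV, of_apply, star_star]
      rw [← h1, h2]
    have hkraus : ∀ (a b : Fin n),
        Φ (single a b (1 : ℂ)) = ∑ r, V r * single a b (1 : ℂ) * (V r)ᴴ := by
      intro a b
      ext i j
      rw [hentry i j a b, Matrix.sum_apply]
      refine Finset.sum_congr rfl fun r _ => ?_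
      simp only [Matrix.mul_apply, Matrix.single, of_apply, conjTranspose_apply, ite_and,
        mul_ite, mul_zero, mul_one, ite_mul, zero_mul,
        Finset.sum_ite_eq, Finset.sum_ite_eq', Finset.mem_univ, if_true]
    set T : Matrix (Fin n × Fin k) (Fin n × Fin k) ℂ →ₗ[ℂ]
        Matrix (Fin m × Fin k) (Fin m × Fin k) ℂ :=
      { toFun := fun N => ∑ r, (V r ⊗ₖ (1 : Matrix (Fin k) (Fin k) ℂ)) * N *
          (V r ⊗ₖ (1 : Matrix (Fin k) (Fin k) ℂ))ᴴ
        map_add' := by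
          intro N₁ N₂
          simp [Matrix.mul_add, Matrix.add_mul, Finset.sum_add_distrib]
        map_smul' := by
          intro c N
          simp [Matrix.mul_smul, Matrix.smul_mul, Finset.smul_sum] } with hT
    have hbasis : ∀ (p q : Fin n × Fin k), Ψ (single p q (1 : ℂ))
        = T (single p q (1 : ℂ)) := by
      rintro ⟨a, c⟩ ⟨b, d⟩
      rw [stdBasis_prod, hΨ, hkraus, sum_kron]
      show _ = ∑ r, (V r ⊗ₖ (1 : Matrix (Fin k) (Fin k) ℂ)) *
          (single a b (1:ℂ) ⊗ₖ single c d (1:ℂ)) *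
          (V r ⊗ₖ (1 : Matrix (Fin k) (Fin k) ℂ))ᴴ
      refine Finset.sum_congr rfl fun r _ => ?_
      rw [kron_one_conjTranspose]
      have h1 : single c d (1:ℂ) =
          (1 : Matrix (Fin k) (Fin k) ℂ) * single c d (1:ℂ) *
          (1 : Matrix (Fin k) (Fin k) ℂ) := by simp
      conv_lhs => rw [h1]
      rw [mul_kronecker_mul, mul_kronecker_mul]
    have hpsi : ∀ N : Matrix (Fin n × Fin k) (Fin n × Fin k) ℂ, Ψ N = T N := by
      intro N
      induction N using Matrix.induction_on' with
      | h_zero => simp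
      | h_add p q hp hq => rw [map_add, map_add, hp, hq]
      | h_std_basis i j x =>
        have hx : single i j x = x • single i j (1 : ℂ) := by
          rw [smul_single, smul_eq_mul, mul_one]
        rw [hx, LinearMap.map_smul, LinearMap.map_smul, hbasis]
    rw [hpsi M]
    show (∑ r, (V r ⊗ₖ (1 : Matrix (Fin k) (Fin k) ℂ)) * M *
      (V r ⊗ₖ (1 : Matrix (Fin k) (Fin k) ℂ))ᴴ).PosSemidef
    exact psd_sum _ _ fun r _ => hMpsd.mul_mul_conjTranspose_same _
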